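/- Let A and B be bounded self-adjoint operators with n ≤ A ≤ N and m ≤ B ≤ M for positive reals n < N, m < M, and let f : (0,∞) → [0,∞) be convex. Suppose the interval [n+m, N+M] is disjoint from [2n, 2N] and from [2m, 2M]. Then 2 f(A + B) ≤ f(2A) + f(2B) in the Loewner order. If moreover f(2t) ≤ 2 f(t) for all t > 0, then f(A+B) ≤ f(A) + f(B). -/
import Mathlib

section Aux

private lemma chord_inside {f : ℝ → ℝ} (hf : ConvexOn ℝ (Set.Ioi 0) f) {a b : ℝ}
    (ha : 0 < a) (hab : a < b) {t : ℝ} (ht : t ∈ Set.Icc a b) :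
    f t ≤ (f b - f a) / (b - a) * t + (f a - (f b - f a) / (b - a) * a) := by
  set α := (f b - f a) / (b - a) with hα
  obtain ⟨h1, h2⟩ := ht
  rcases eq_or_lt_of_le h1 with rfl | h1
  · linarith
  · have hs := hf.secant_mono (a := a) (x := t) (y := b)
      (Set.mem_Ioi.mpr ha) (Set.mem_Ioi.mpr (ha.trans h1)) (Set.mem_Ioi.mpr (ha.trans hab))
      (ne_of_gt h1) (ne_of_gt hab) h2
    rw [div_le_iff₀ (by linarith)] at hs
    nlinarith [hs]

private lemma chord_outside {f : ℝ → ℝ} (hf : ConvexOn ℝ (Set.Ioi 0) f) {a b : ℝ}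
    (ha : 0 < a) (hab : a < b) {t : ℝ} (ht : 0 < t) (hout : t ≤ a ∨ b ≤ t) :
    (f b - f a) / (b - a) * t + (f a - (f b - f a) / (b - a) * a) ≤ f t := by
  set α := (f b - f a) / (b - a) with hα
  have hba : b - a ≠ 0 := by linarith
  have hchord : α * (b - a) = f b - f a := div_mul_cancel₀ _ hba
  rcases hout with h | h
  · rcases eq_or_lt_of_le h with rfl | h
    · linarith
    · have hs := hf.secant_mono (a := a) (x := t) (y := b)
        (Set.mem_Ioi.mpr ha) (Set.mem_Ioi.mpr ht) (Set.mem_Ioi.mpr (ha.trans hab))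
        (ne_of_lt h) (ne_of_gt hab) (by linarith)
      rw [div_le_iff_of_neg (by linarith)] at hs
      nlinarith [hs]
  · rcases eq_or_lt_of_le h with rfl | h
    · nlinarith [hchord]
    · have hs := hf.secant_mono (a := a) (x := b) (y := t)
        (Set.mem_Ioi.mpr ha) (Set.mem_Ioi.mpr (ha.trans hab)) (Set.mem_Ioi.mpr ht)
        (ne_of_gt hab) (ne_of_gt (hab.trans h)) (le_of_lt h)
      rw [le_div_iff₀ (by linarith)] at hs
      nlinarith [hs, hchord]

private lemma spec_subset_Icc {H : Type*} [NormedAddCommGroup H] [InnerProductSpace ℂ H]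
    [CompleteSpace H] {X : H →L[ℂ] H} (hX : IsSelfAdjoint X) {r s : ℝ}
    (h1 : r • (1 : H →L[ℂ] H) ≤ X) (h2 : X ≤ s • (1 : H →L[ℂ] H)) :
    spectrum ℝ X ⊆ Set.Icc r s := by
  intro x hx
  rw [← Algebra.algebraMap_eq_smul_one] at h1 h2
  exact ⟨(algebraMap_le_iff_le_spectrum hX).mp h1 x hx,
    (le_algebraMap_iff_spectrum_le hX).mp h2 x hx⟩

private lemma cfc_affine {H : Type*} [NormedAddCommGroup H] [InnerProductSpace ℂ H]
    [CompleteSpace H] {X : H →L[ℂ] H} (hX : IsSelfAdjoint X) (α c : ℝ) :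
    cfc (fun t : ℝ => α * t + c) X = α • X + c • (1 : H →L[ℂ] H) := by
  rw [cfc_add_const c (fun t : ℝ => α * t) X (by fun_prop) hX,
    cfc_const_mul_id α X hX, Algebra.algebraMap_eq_smul_one]

end Aux

set_option maxHeartbeats 1000000 in
/-- subadditivity consequence of the midpoint operator Jensen inequality for a
scalar convex function under spectral separation. -/
theorem operator_subadditivity_convex
    {H : Type*} [NormedAddCommGroup H] [InnerProductSpace ℂ H] [CompleteSpace H]
    (A B : H →L[ℂ] H) (hA : IsSelfAdjoint A) (hB : IsSelfAdjoint B)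
    (n N m M : ℝ) (hn : 0 < n) (hnN : n < N) (hm : 0 < m) (hmM : m < M)
    (hA₁ : n • (1 : H →L[ℂ] H) ≤ A) (hA₂ : A ≤ N • (1 : H →L[ℂ] H))
    (hB₁ : m • (1 : H →L[ℂ] H) ≤ B) (hB₂ : B ≤ M • (1 : H →L[ℂ] H))
    (f : ℝ → ℝ) (hf : ConvexOn ℝ (Set.Ioi 0) f) (hf0 : ∀ t ∈ Set.Ioi (0 : ℝ), 0 ≤ f t)
    (hdis₁ : Set.Icc (n + m) (N + M) ∩ Set.Icc (2 * n) (2 * N) = ∅)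
    (hdis₂ : Set.Icc (n + m) (N + M) ∩ Set.Icc (2 * m) (2 * M) = ∅) :
    (2 : ℝ) • cfc f (A + B) ≤ cfc f ((2 : ℝ) • A) + cfc f ((2 : ℝ) • B) ∧
    ((∀ t > (0 : ℝ), f (2 * t) ≤ 2 * f t) → cfc f (A + B) ≤ cfc f A + cfc f B) := by
  have hab : n + m < N + M := by linarith
  have hab0 : 0 < n + m := by linarith
  -- selfadjointness
  have hAB : IsSelfAdjoint (A + B) := hA.add hB
  have h2A : IsSelfAdjoint ((2 : ℝ) • A) := by rw [two_smul]; exact hA.add hA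
  have h2B : IsSelfAdjoint ((2 : ℝ) • B) := by rw [two_smul]; exact hB.add hB
  -- spectra
  have specA : spectrum ℝ A ⊆ Set.Icc n N := spec_subset_Icc hA hA₁ hA₂
  have specB : spectrum ℝ B ⊆ Set.Icc m M := spec_subset_Icc hB hB₁ hB₂
  have specAB : spectrum ℝ (A + B) ⊆ Set.Icc (n + m) (N + M) :=
    spec_subset_Icc hAB (by rw [add_smul]; exact add_le_add hA₁ hB₁)
      (by rw [add_smul]; exact add_le_add hA₂ hB₂)
  have spec2A : spectrum ℝ ((2 : ℝ) • A) ⊆ Set.Icc (2 * n) (2 * N) :=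
    spec_subset_Icc h2A
      (by rw [two_smul, show (2 * n : ℝ) = n + n by ring, add_smul]; exact add_le_add hA₁ hA₁)
      (by rw [two_smul, show (2 * N : ℝ) = N + N by ring, add_smul]; exact add_le_add hA₂ hA₂)
  have spec2B : spectrum ℝ ((2 : ℝ) • B) ⊆ Set.Icc (2 * m) (2 * M) :=
    spec_subset_Icc h2B
      (by rw [two_smul, show (2 * m : ℝ) = m + m by ring, add_smul]; exact add_le_add hB₁ hB₁)
      (by rw [two_smul, show (2 * M : ℝ) = M + M by ring, add_smul]; exact add_le_add hB₂ hB₂)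
  -- separation
  have houtA : ∀ y ∈ Set.Icc (2 * n) (2 * N), y ≤ n + m ∨ N + M ≤ y := by
    intro y hy
    by_contra hc
    push_neg at hc
    exact (Set.eq_empty_iff_forall_notMem.mp hdis₁ y) ⟨⟨hc.1.le, hc.2.le⟩, hy⟩
  have houtB : ∀ y ∈ Set.Icc (2 * m) (2 * M), y ≤ n + m ∨ N + M ≤ y := by
    intro y hy
    by_contra hc
    push_neg at hc
    exact (Set.eq_empty_iff_forall_notMem.mp hdis₂ y) ⟨⟨hc.1.le, hc.2.le⟩, hy⟩
  -- continuity
  have hfc : ContinuousOn f (Set.Ioi 0) := hf.continuousOn isOpen_Ioi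
  set α := (f (N + M) - f (n + m)) / (N + M - (n + m)) with hαdef
  set c := f (n + m) - α * (n + m) with hcdef
  -- key estimates
  have key1 : cfc f (A + B) ≤ cfc (fun t : ℝ => α * t + c) (A + B) := by
    refine cfc_mono (fun x hx => chord_inside hf hab0 hab (specAB hx))
      (hfc.mono fun x hx => lt_of_lt_of_le hab0 (specAB hx).1) (by fun_prop)
  have key2A : cfc (fun t : ℝ => α * t + c) ((2 : ℝ) • A) ≤ cfc f ((2 : ℝ) • A) := by
    refine cfc_mono (fun x hx => chord_outside hf hab0 hab
        (lt_of_lt_of_le (by linarith : (0:ℝ) < 2 * n) (spec2A hx).1) (houtA x (spec2A hx)))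
      (by fun_prop)
      (hfc.mono fun x hx => lt_of_lt_of_le (by linarith : (0:ℝ) < 2 * n) (spec2A hx).1)
  have key2B : cfc (fun t : ℝ => α * t + c) ((2 : ℝ) • B) ≤ cfc f ((2 : ℝ) • B) := by
    refine cfc_mono (fun x hx => chord_outside hf hab0 hab
        (lt_of_lt_of_le (by linarith : (0:ℝ) < 2 * m) (spec2B hx).1) (houtB x (spec2B hx)))
      (by fun_prop)
      (hfc.mono fun x hx => lt_of_lt_of_le (by linarith : (0:ℝ) < 2 * m) (spec2B hx).1)
  have cAB := cfc_affine hAB α c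
  have c2A := cfc_affine h2A α c
  have c2B := cfc_affine h2B α c
  constructor
  · calc (2 : ℝ) • cfc f (A + B) = cfc f (A + B) + cfc f (A + B) := two_smul ℝ _
      _ ≤ cfc (fun t : ℝ => α * t + c) (A + B) + cfc (fun t : ℝ => α * t + c) (A + B) :=
          add_le_add key1 key1
      _ = cfc (fun t : ℝ => α * t + c) ((2 : ℝ) • A)
          + cfc (fun t : ℝ => α * t + c) ((2 : ℝ) • B) := by
          rw [cAB, c2A, c2B]; module
      _ ≤ cfc f ((2 : ℝ) • A) + cfc f ((2 : ℝ) • B) := add_le_add key2A key2B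
  · intro hsub
    have keyA : cfc (fun t : ℝ => α * t + c / 2) A ≤ cfc f A := by
      refine cfc_mono (fun x hx => ?_) (by fun_prop)
        (hfc.mono fun x hx => lt_of_lt_of_le hn (specA hx).1)
      have hx' := specA hx
      have hxpos : 0 < x := lt_of_lt_of_le hn hx'.1
      have h2x : 2 * x ∈ Set.Icc (2 * n) (2 * N) := ⟨by linarith [hx'.1], by linarith [hx'.2]⟩
      have hco := chord_outside hf hab0 hab (by linarith : (0:ℝ) < 2 * x) (houtA _ h2x)
      have hs := hsub x hxpos
      linarith
    have keyB : cfc (fun t : ℝ => α * t + c / 2) B ≤ cfc f B := by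
      refine cfc_mono (fun x hx => ?_) (by fun_prop)
        (hfc.mono fun x hx => lt_of_lt_of_le hm (specB hx).1)
      have hx' := specB hx
      have hxpos : 0 < x := lt_of_lt_of_le hm hx'.1
      have h2x : 2 * x ∈ Set.Icc (2 * m) (2 * M) := ⟨by linarith [hx'.1], by linarith [hx'.2]⟩
      have hco := chord_outside hf hab0 hab (by linarith : (0:ℝ) < 2 * x) (houtB _ h2x)
      have hs := hsub x hxpos
      linarith
    calc cfc f (A + B) ≤ cfc (fun t : ℝ => α * t + c) (A + B) := key1
      _ = cfc (fun t : ℝ => α * t + c / 2) A + cfc (fun t : ℝ => α * t + c / 2) B := by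
          rw [cAB, cfc_affine hA α (c / 2), cfc_affine hB α (c / 2)]; module
      _ ≤ cfc f A + cfc f B := add_le_add keyA keyB
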